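/- arXiv:2605.27646 — 2 statements merged into one kernel-verified Lean document; each statement's English description precedes it below -/
import Mathlib

section
/- There exist constants c₀ > 0 and θ₀ > 0 such that the following holds. Let S ≥ 1, let q₁, …, q_S be independent random unit quaternions each distributed according to the normalized Haar probability measure, and let C = {p · qᵢ : p ∈ 2T, 1 ≤ i ≤ S}. Then for every unit quaternion x and every θ with 0 < θ ≤ θ₀, the probability that no element of C lies within Euclidean distance θ of x is at most (1 − c₀θ³)^S, which is at most exp(−c₀ · S · θ³). -/
open MeasureTheory ProbabilityTheory

noncomputable section

/-- The imaginary quaternion unit `i`. -/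
def qI : Quaternion ℝ := ⟨0, 1, 0, 0⟩
/-- The imaginary quaternion unit `j`. -/
def qJ : Quaternion ℝ := ⟨0, 0, 1, 0⟩
/-- The imaginary quaternion unit `k`. -/
def qK : Quaternion ℝ := ⟨0, 0, 0, 1⟩

/-- The 24-element Hurwitz set `2T`:
`{±1, ±i, ±j, ±k} ∪ {(±1 ± i ± j ± k)/2 : all sixteen sign choices}`. -/
def Hurwitz : Set (Quaternion ℝ) :=
  ({1, -1, qI, -qI, qJ, -qJ, qK, -qK} : Set (Quaternion ℝ)) ∪
    {q | ∃ s₁ s₂ s₃ s₄ : ℝ, s₁ ∈ ({1, -1} : Set ℝ) ∧ s₂ ∈ ({1, -1} : Set ℝ) ∧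
      s₃ ∈ ({1, -1} : Set ℝ) ∧ s₄ ∈ ({1, -1} : Set ℝ) ∧
      q = (⟨s₁ / 2, s₂ / 2, s₃ / 2, s₄ / 2⟩ : Quaternion ℝ)}

instance : MeasurableSpace (Quaternion ℝ) := borel _
instance : BorelSpace (Quaternion ℝ) := ⟨rfl⟩

/-- The group of unit quaternions, i.e. the unit sphere `S³ ⊂ ℍ ≅ ℝ⁴`. -/
abbrev UnitQuat : Type := Metric.sphere (0 : Quaternion ℝ) 1

namespace CodebookAux

open Metric

instance : MeasurableMul UnitQuat :=
  ⟨fun c => (continuous_mul_left c).measurable, fun c => (continuous_mul_right c).measurable⟩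

/-- A `θ`-separated finite set of unit quaternions has at most `128 / θ³` elements. -/
lemma sep_card_le {θ : ℝ} (hθ : 0 < θ) (hθ1 : θ ≤ 1)
    (F : Finset (Quaternion ℝ)) (hnorm : ∀ y ∈ F, ‖y‖ = 1)
    (hsep : ∀ y ∈ F, ∀ z ∈ F, y ≠ z → θ ≤ ‖y - z‖) :
    (F.card : ℝ) ≤ 128 / θ ^ 3 := by
  set t : ℝ := θ / 2 with ht_def
  have ht : 0 < t := by positivity
  have ht1 : t ≤ 1/2 := by simp only [ht_def]; linarith
  set ν : Measure (Quaternion ℝ) := (Module.Basis.ofVectorSpace ℝ (Quaternion ℝ)).addHaar with hν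
  set v : ENNReal := ν (ball (0 : Quaternion ℝ) 1) with hv
  have hv0 : v ≠ 0 := (measure_ball_pos ν _ one_pos).ne'
  have hvtop : v ≠ ⊤ := measure_ball_lt_top.ne
  have hdisj : (↑F : Set (Quaternion ℝ)).PairwiseDisjoint fun y => ball y t := by
    intro y hy z hz hne
    apply ball_disjoint_ball
    rw [dist_eq_norm]
    have := hsep y hy z hz hne
    linarith
  have hsum : ν (⋃ y ∈ F, ball y t) = ∑ y ∈ F, ν (ball y t) :=
    measure_biUnion_finset hdisj fun y _ => measurableSet_ball
  have hsub : (⋃ y ∈ F, ball y t) ∪ ball 0 (1 - t) ⊆ closedBall (0 : Quaternion ℝ) (1 + t) := by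
    rintro z (hz | hz)
    · simp only [Set.mem_iUnion, mem_ball] at hz
      obtain ⟨y, hy, hzy⟩ := hz
      simp only [mem_closedBall, dist_zero_right]
      have h1 : ‖z - y‖ < t := by rwa [dist_eq_norm] at hzy
      have hy1 := hnorm y hy
      calc ‖z‖ ≤ ‖z - y‖ + ‖y‖ := by simpa using norm_add_le (z - y) y
        _ ≤ 1 + t := by rw [hy1]; linarith
    · refine ball_subset_closedBall.trans (closedBall_subset_closedBall (by linarith)) hz
  have hdisj2 : Disjoint (⋃ y ∈ F, ball y t) (ball (0 : Quaternion ℝ) (1 - t)) := by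
    rw [Set.disjoint_left]
    intro z hz hz2
    simp only [Set.mem_iUnion, mem_ball] at hz
    obtain ⟨y, hy, hzy⟩ := hz
    rw [mem_ball, dist_zero_right] at hz2
    rw [dist_eq_norm] at hzy
    have hy1 := hnorm y hy
    have : ‖y‖ ≤ ‖y - z‖ + ‖z‖ := by simpa using norm_add_le (y - z) z
    rw [norm_sub_rev] at hzy
    linarith [hy1 ▸ this]
  have hle : ν (⋃ y ∈ F, ball y t) + ν (ball (0 : Quaternion ℝ) (1 - t))
      ≤ ν (closedBall (0 : Quaternion ℝ) (1 + t)) := by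
    rw [← measure_union hdisj2 measurableSet_ball]
    exact measure_mono hsub
  have hfr : Module.finrank ℝ (Quaternion ℝ) = 4 := Quaternion.finrank_eq_four
  have hball : ∀ y : Quaternion ℝ, ν (ball y t) = ENNReal.ofReal (t ^ 4) * v := by
    intro y
    rw [hv, Measure.addHaar_ball ν y ht.le, hfr]
  have hball2 : ν (ball (0 : Quaternion ℝ) (1 - t)) = ENNReal.ofReal ((1 - t) ^ 4) * v := by
    rw [hv, Measure.addHaar_ball ν _ (by linarith), hfr]
  have hball3 : ν (closedBall (0 : Quaternion ℝ) (1 + t)) = ENNReal.ofReal ((1 + t) ^ 4) * v := by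
    rw [hv, Measure.addHaar_closedBall ν _ (by linarith), hfr]
  rw [hsum] at hle
  simp only [hball, Finset.sum_const, nsmul_eq_mul, hball2, hball3] at hle
  set V : ℝ := v.toReal with hV
  have hV0 : 0 < V := ENNReal.toReal_pos hv0 hvtop
  have hreal : (F.card : ℝ) * (t ^ 4 * V) + (1 - t) ^ 4 * V ≤ (1 + t) ^ 4 * V := by
    have h1 := ENNReal.toReal_mono (by finiteness) hle
    rw [ENNReal.toReal_add (by finiteness) (by finiteness)] at h1
    simpa [ENNReal.toReal_mul, ENNReal.toReal_ofReal, ht.le, abs_of_nonneg,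
      pow_nonneg ht.le, pow_nonneg (by linarith : (0:ℝ) ≤ 1 - t),
      pow_nonneg (by linarith : (0:ℝ) ≤ 1 + t), mul_assoc] using h1
  have hmain : (F.card : ℝ) * t ^ 4 + (1 - t) ^ 4 ≤ (1 + t) ^ 4 := by
    have := hreal
    nlinarith [hV0]
  rw [le_div_iff₀ (by positivity)]
  have hθ3 : θ ^ 3 ≤ θ := by nlinarith [sq_nonneg θ]
  have hmain' : (F.card : ℝ) * (θ/2) ^ 4 + (1 - θ/2) ^ 4 ≤ (1 + θ/2) ^ 4 := by
    rw [← ht_def]; exact hmain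
  have h8 : (F.card : ℝ) * θ ^ 4 ≤ 128 * θ := by nlinarith [hmain', hθ3]
  have h9 : (F.card : ℝ) * θ ^ 3 * θ ≤ 128 * θ := by nlinarith [h8]
  exact le_of_mul_le_mul_right (by linarith) hθ

/-- Haar measure of balls on the unit-quaternion group does not depend on the center. -/
lemma ball_meas_eq (μ : Measure UnitQuat) [μ.IsMulLeftInvariant] (x y : UnitQuat) (r : ℝ) :
    μ (ball x r) = μ (ball y r) := by
  have key : (fun h => (y * x⁻¹ : UnitQuat) * h) ⁻¹' ball y r = ball x r := by
    ext h
    have hy : (y : Quaternion ℝ) = ((y * x⁻¹ : UnitQuat) : Quaternion ℝ) * x := by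
      push_cast [mul_assoc]
      norm_cast
      simp
    simp only [Set.mem_preimage, mem_ball, Subtype.dist_eq, dist_eq_norm, hy]
    rw [show ((y * x⁻¹ * h : UnitQuat) : Quaternion ℝ)
        = ((y * x⁻¹ : UnitQuat) : Quaternion ℝ) * h from rfl, ← mul_sub, norm_mul,
      mem_sphere_zero_iff_norm.1 (y * x⁻¹).2, one_mul]
  rw [← key, measure_preimage_mul]

/-- A maximal `θ`-separated subset of the unit quaternions. -/
lemma exists_maximal_sep (θ : ℝ) (hθ : 0 < θ) :
    ∃ D : Set UnitQuat, (D.Pairwise fun a b => θ ≤ dist a b) ∧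
      ∀ z : UnitQuat, ∃ d ∈ D, dist z d < θ := by
  have hzorn : ∀ c ⊆ {D : Set UnitQuat | D.Pairwise fun a b => θ ≤ dist a b},
      IsChain (· ⊆ ·) c →
      ∃ ub ∈ {D : Set UnitQuat | D.Pairwise fun a b => θ ≤ dist a b}, ∀ s ∈ c, s ⊆ ub := by
    intro c hc hchain
    refine ⟨⋃₀ c, fun a ⟨s, hs, has⟩ b ⟨u, hu, hbu⟩ hne => ?_,
      fun s hs => Set.subset_sUnion_of_mem hs⟩
    rcases hchain.total hs hu with h | h
    · exact hc hu (h has) hbu hne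
    · exact hc hs has (h hbu) hne
  obtain ⟨D, hD⟩ := zorn_subset {D : Set UnitQuat | D.Pairwise fun a b => θ ≤ dist a b} hzorn
  refine ⟨D, hD.prop, fun z => ?_⟩
  by_contra hcon
  push_neg at hcon
  have hz : z ∉ D := fun hz => absurd (by simpa using hcon z hz) (not_le.2 hθ)
  have hins : Set.Pairwise (insert z D) fun a b => θ ≤ dist a b := by
    refine hD.prop.insert fun d hd hne => ?_
    exact ⟨hcon d hd, by rw [dist_comm]; exact hcon d hd⟩
  have heq := hD.eq_of_subset hins (Set.subset_insert z D)
  exact hz (heq ▸ Set.mem_insert z D)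

/-- Lower bound on the Haar measure of a spherical cap. -/
lemma cap_meas_ge (μ : Measure UnitQuat) [μ.IsMulLeftInvariant] [IsProbabilityMeasure μ]
    (x : UnitQuat) {θ : ℝ} (hθ : 0 < θ) (hθ1 : θ ≤ 1) :
    ENNReal.ofReal (θ ^ 3 / 128) ≤ μ (ball x θ) := by
  obtain ⟨D, hDsep, hDcov⟩ := exists_maximal_sep θ hθ
  -- any finite subset of D, viewed in ℍ, is θ-separated with unit norms
  have hcard : ∀ F : Finset UnitQuat, ↑F ⊆ D → (F.card : ℝ) ≤ 128 / θ ^ 3 := by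
    classical
    intro F hF
    have := sep_card_le hθ hθ1 (F.image (Subtype.val))
      (fun y hy => by
        obtain ⟨a, _, rfl⟩ := Finset.mem_image.1 hy
        exact mem_sphere_zero_iff_norm.1 a.2)
      (fun y hy z hz hne => by
        obtain ⟨a, ha, rfl⟩ := Finset.mem_image.1 hy
        obtain ⟨b, hb, rfl⟩ := Finset.mem_image.1 hz
        have hab : a ≠ b := fun h => hne (by rw [h])
        have hd : θ ≤ dist a b := hDsep (hF ha) (hF hb) hab
        rwa [Subtype.dist_eq, dist_eq_norm] at hd)
    rwa [Finset.card_image_of_injective _ Subtype.coe_injective] at this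
  have hDfin : D.Finite := by
    by_contra hinf
    obtain ⟨F, hFsub, hFcard⟩ :=
      Set.Infinite.exists_subset_card_eq hinf (⌊(128 : ℝ) / θ ^ 3⌋₊ + 1)
    have h1 := hcard F hFsub
    rw [hFcard] at h1
    have h2 : (128 : ℝ) / θ ^ 3 < ⌊(128 : ℝ) / θ ^ 3⌋₊ + 1 := Nat.lt_floor_add_one _
    push_cast at h1
    linarith
  set T : Finset UnitQuat := hDfin.toFinset with hT
  have hTsub : ↑T ⊆ D := by rw [hT, Set.Finite.coe_toFinset]
  have hTcard : (T.card : ℝ) ≤ 128 / θ ^ 3 := hcard T hTsub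
  have hcov : (Set.univ : Set UnitQuat) ⊆ ⋃ d ∈ T, ball d θ := by
    intro z _
    obtain ⟨d, hd, hzd⟩ := hDcov z
    exact Set.mem_biUnion (show d ∈ T from hDfin.mem_toFinset.2 hd) (mem_ball.2 hzd)
  have hone : (1 : ENNReal) ≤ T.card * μ (ball x θ) := by
    calc (1 : ENNReal) = μ Set.univ := (measure_univ).symm
      _ ≤ μ (⋃ d ∈ T, ball d θ) := measure_mono hcov
      _ ≤ ∑ d ∈ T, μ (ball d θ) := measure_biUnion_finset_le T _
      _ = T.card * μ (ball x θ) := by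
          rw [Finset.sum_congr rfl fun d _ => ball_meas_eq μ d x θ]
          simp
  have hT0 : T.card ≠ 0 := by
    rintro h0
    rw [h0] at hone
    simp at hone
  have hkey : (T.card : ENNReal) * ENNReal.ofReal (θ ^ 3 / 128) ≤ T.card * μ (ball x θ) := by
    refine le_trans ?_ hone
    rw [← ENNReal.ofReal_natCast, ← ENNReal.ofReal_mul (by positivity)]
    refine ENNReal.ofReal_le_one.2 ?_
    rw [← le_div_iff₀ (by positivity)]
    calc (T.card : ℝ) ≤ 128 / θ ^ 3 := hTcard
      _ = 1 / (θ ^ 3 / 128) := by field_simp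
  exact (ENNReal.mul_le_mul_iff_right (by exact_mod_cast hT0) (by finiteness)).1 hkey

end CodebookAux

open CodebookAux Metric in
/-- There are constants `c₀ > 0` and `θ₀ > 0` such that: if `q₁, …, q_S` (`S ≥ 1`) are i.i.d.
Haar-random unit quaternions and `C = {p * qᵢ : p ∈ 2T, i ∈ [S]}`, then for every unit
quaternion `x` and every `0 < θ ≤ θ₀`, the probability that no element of `C` lies within
Euclidean distance `θ` of `x` is at most `(1 - c₀ θ³)^S`, which is at most
`exp (-c₀ * S * θ³)`. -/
theorem codebook_miss_cap_prob_upper_bound :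
    ∃ c₀ > (0 : ℝ), ∃ θ₀ > (0 : ℝ),
      ∀ (S : ℕ), 1 ≤ S →
        ∀ {Ω : Type} [MeasurableSpace Ω] (P : Measure Ω) [IsProbabilityMeasure P]
          (μ : Measure UnitQuat) [μ.IsHaarMeasure] [IsProbabilityMeasure μ]
          (X : Fin S → Ω → UnitQuat),
          (∀ i, Measurable (X i)) → (∀ i, Measure.map (X i) P = μ) →
          iIndepFun X P →
          ∀ x : UnitQuat, ∀ θ : ℝ, 0 < θ → θ ≤ θ₀ →
            P {ω | ∀ p ∈ Hurwitz, ∀ i : Fin S,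
                θ < ‖p * (X i ω : Quaternion ℝ) - (x : Quaternion ℝ)‖} ≤
              ENNReal.ofReal ((1 - c₀ * θ ^ 3) ^ S) ∧
            (1 - c₀ * θ ^ 3) ^ S ≤ Real.exp (-(c₀ * S * θ ^ 3)) := by
  refine ⟨1/128, by norm_num, 1, by norm_num, ?_⟩
  intro S hS Ω _ P _ μ _ _ X hmeas hmap hind x θ hθ hθ1
  have hc : (0:ℝ) ≤ 1 - 1/128 * θ ^ 3 := by nlinarith [pow_le_one₀ hθ.le hθ1 (n := 3)]
  constructor
  · -- probability bound
    set A : Set UnitQuat := {q | θ < dist q x} with hA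
    have hAmeas : MeasurableSet A := by
      have : IsOpen A := isOpen_lt continuous_const (continuous_id.dist continuous_const)
      exact this.measurableSet
    have hsub : {ω | ∀ p ∈ Hurwitz, ∀ i : Fin S,
        θ < ‖p * (X i ω : Quaternion ℝ) - (x : Quaternion ℝ)‖} ⊆ ⋂ i, X i ⁻¹' A := by
      intro ω hω
      simp only [Set.mem_iInter, Set.mem_preimage]
      intro i
      have h1 : (1 : Quaternion ℝ) ∈ Hurwitz := Or.inl (by simp)
      have := hω 1 h1 i
      rw [one_mul] at this
      simpa [hA, Subtype.dist_eq, dist_eq_norm] using this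
    have hprod : P (⋂ i, X i ⁻¹' A) = ∏ i : Fin S, P (X i ⁻¹' A) :=
      hind.meas_iInter fun i => ⟨A, hAmeas, rfl⟩
    have hterm : ∀ i : Fin S, P (X i ⁻¹' A) ≤ ENNReal.ofReal (1 - 1/128 * θ ^ 3) := by
      intro i
      have h1 : P (X i ⁻¹' A) = μ A := by
        rw [← hmap i, Measure.map_apply (hmeas i) hAmeas]
      have hAc : A = (closedBall x θ)ᶜ := by
        ext q
        simp [hA, not_le]
      have h2 : μ A = 1 - μ (closedBall x θ) := by
        rw [hAc, prob_compl_eq_one_sub measurableSet_closedBall]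
      have h3 : ENNReal.ofReal (θ ^ 3 / 128) ≤ μ (closedBall x θ) :=
        le_trans (cap_meas_ge μ x hθ hθ1) (measure_mono ball_subset_closedBall)
      rw [h1, h2]
      calc 1 - μ (closedBall x θ) ≤ 1 - ENNReal.ofReal (θ ^ 3 / 128) :=
            tsub_le_tsub_left h3 1
        _ = ENNReal.ofReal (1 - 1/128 * θ ^ 3) := by
            rw [← ENNReal.ofReal_one, ← ENNReal.ofReal_sub _ (by positivity)]
            ring_nf
    calc P {ω | ∀ p ∈ Hurwitz, ∀ i : Fin S,
            θ < ‖p * (X i ω : Quaternion ℝ) - (x : Quaternion ℝ)‖}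
        ≤ P (⋂ i, X i ⁻¹' A) := measure_mono hsub
      _ = ∏ i : Fin S, P (X i ⁻¹' A) := hprod
      _ ≤ ∏ _i : Fin S, ENNReal.ofReal (1 - 1/128 * θ ^ 3) :=
          Finset.prod_le_prod' fun i _ => hterm i
      _ = ENNReal.ofReal ((1 - 1/128 * θ ^ 3) ^ S) := by
          rw [Finset.prod_const, ENNReal.ofReal_pow hc]
          simp
  · -- exponential bound
    have h1 : 1 - 1/128 * θ ^ 3 ≤ Real.exp (-(1/128 * θ ^ 3)) := by
      linarith [Real.add_one_le_exp (-(1/128 * θ ^ 3))]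
    calc (1 - 1/128 * θ ^ 3) ^ S ≤ Real.exp (-(1/128 * θ ^ 3)) ^ S :=
          pow_le_pow_left₀ hc h1 S
      _ = Real.exp (-(1/128 * S * θ ^ 3)) := by
          rw [← Real.exp_nat_mul]
          ring_nf
end
end

section
/- There exist constants c₀ > 0, c₁ > 0 and θ₀ > 0 such that the following holds. Let S ≥ 1, let q₁, …, q_S be independent random unit quaternions each distributed according to the normalized Haar probability measure, and let C = {p · qᵢ : p ∈ 2T, 1 ≤ i ≤ S}. Then for every θ with 0 < θ ≤ θ₀, the covering radius ρ(C) = sup over unit quaternions x of the minimum over c ∈ C of ‖x − c‖ satisfies Pr[ρ(C) > 2θ] ≤ c₁ · θ⁻³ · exp(−c₀ · S · θ³). -/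
open MeasureTheory ProbabilityTheory

noncomputable section
open Real
open scoped ENNReal

/-- The covering radius of a set `C` of quaternions with respect to the unit sphere:
`ρ(C) = sup_{x : ‖x‖ = 1} inf_{c ∈ C} ‖x - c‖`. -/
def covRad (C : Set (Quaternion ℝ)) : ℝ :=
  sSup {d : ℝ | ∃ x : Quaternion ℝ, ‖x‖ = 1 ∧
    d = sInf {e : ℝ | ∃ c ∈ C, e = ‖x - c‖}}

instance : DecidableEq (Quaternion ℝ) := Classical.decEq _
instance : DecidableEq UnitQuat := Classical.decEq _


lemma prod_lip (x x' y y' : ℝ) (hx : |x| ≤ 1) (hy : |y'| ≤ 1) :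
    |x*y - x'*y'| ≤ |x - x'| + |y - y'| := by
  have : x*y - x'*y' = x*(y - y') + (x - x')*y' := by ring
  rw [this]
  calc |x*(y-y') + (x-x')*y'| ≤ |x*(y-y')| + |(x-x')*y'| := abs_add_le _ _
  _ ≤ |x-x'| + |y-y'| := by
      rw [abs_mul, abs_mul]
      have h1 : |x| * |y - y'| ≤ 1 * |y - y'| := by gcongr
      have h2 : |x - x'| * |y'| ≤ |x - x'| * 1 := by gcongr
      simp at h1 h2; linarith

lemma exists_cos_sin (u v : ℝ) (h : u^2 + v^2 = 1) :
    ∃ t ∈ Set.Icc (-π) π, Real.cos t = u ∧ Real.sin t = v := by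
  have hz : (⟨u, v⟩ : ℂ) ≠ 0 := by
    intro hz
    rw [Complex.ext_iff] at hz
    simp at hz
    rw [hz.1, hz.2] at h; norm_num at h
  have habs : ‖(⟨u, v⟩ : ℂ)‖ = 1 := by
    simp [Complex.norm_def, Complex.normSq_apply]
    nlinarith [Real.sqrt_one]
  refine ⟨Complex.arg ⟨u, v⟩, ⟨(Complex.neg_pi_lt_arg _).le, Complex.arg_le_pi _⟩, ?_, ?_⟩
  · rw [Complex.cos_arg hz, habs]; simp
  · rw [Complex.sin_arg, habs]; simp

lemma cos_lip (x y : ℝ) : |Real.cos x - Real.cos y| ≤ |x - y| := by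
  rw [Real.cos_sub_cos]
  rw [abs_mul, abs_mul, abs_neg]
  have h1 : |Real.sin ((x + y) / 2)| ≤ 1 := Real.abs_sin_le_one _
  have h2 : |Real.sin ((x - y) / 2)| ≤ |(x - y) / 2| := Real.abs_sin_le_abs
  have h3 : |(x - y) / 2| = |x - y| / 2 := by rw [abs_div]; norm_num
  have h4 : (0:ℝ) ≤ |Real.sin ((x - y)/2)| := abs_nonneg _
  calc |(2:ℝ)| * |Real.sin ((x + y) / 2)| * |Real.sin ((x - y) / 2)|
      ≤ |(2:ℝ)| * 1 * |(x - y) / 2| := by gcongr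
    _ = |x - y| := by rw [h3, abs_two]; ring
  
lemma sin_lip (x y : ℝ) : |Real.sin x - Real.sin y| ≤ |x - y| := by
  rw [Real.sin_sub_sin]
  rw [abs_mul, abs_mul]
  have h1 : |Real.cos ((x + y) / 2)| ≤ 1 := Real.abs_cos_le_one _
  have h2 : |Real.sin ((x - y) / 2)| ≤ |(x - y) / 2| := Real.abs_sin_le_abs
  have h3 : |(x - y) / 2| = |x - y| / 2 := by rw [abs_div]; norm_num
  have h4 : (0:ℝ) ≤ |Real.sin ((x - y)/2)| := abs_nonneg _
  calc |(2:ℝ)| * |Real.sin ((x - y) / 2)| * |Real.cos ((x + y) / 2)|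
      ≤ |(2:ℝ)| * |(x - y) / 2| * 1 := by gcongr
    _ = |x - y| := by rw [h3, abs_two]; ring

/-- Hopf-coordinate parametrization of the unit sphere of quaternions. -/
def Phi (a b c : ℝ) : Quaternion ℝ :=
  ⟨Real.cos a * Real.cos b, Real.cos a * Real.sin b,
   Real.sin a * Real.cos c, Real.sin a * Real.sin c⟩

lemma quat_norm_le (q : Quaternion ℝ) : ‖q‖ ≤ |q.1| + |q.2| + |q.3| + |q.4| := by
  have h := Quaternion.normSq_eq_norm_mul_self q
  rw [Quaternion.normSq_def'] at h
  nlinarith [norm_nonneg q, abs_nonneg q.1, abs_nonneg q.2, abs_nonneg q.3, abs_nonneg q.4,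
    sq_abs q.1, sq_abs q.2, sq_abs q.3, sq_abs q.4,
    abs_mul_abs_self q.1, abs_mul_abs_self q.2, abs_mul_abs_self q.3, abs_mul_abs_self q.4,
    mul_nonneg (abs_nonneg q.1) (abs_nonneg q.2), mul_nonneg (abs_nonneg q.1) (abs_nonneg q.3),
    mul_nonneg (abs_nonneg q.1) (abs_nonneg q.4), mul_nonneg (abs_nonneg q.2) (abs_nonneg q.3),
    mul_nonneg (abs_nonneg q.2) (abs_nonneg q.4), mul_nonneg (abs_nonneg q.3) (abs_nonneg q.4)]

lemma Phi_norm (a b c : ℝ) : ‖Phi a b c‖ = 1 := by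
  have h := Quaternion.normSq_eq_norm_mul_self (Phi a b c)
  rw [Quaternion.normSq_def'] at h
  have e : (Phi a b c).1 ^ 2 + (Phi a b c).2 ^ 2 + (Phi a b c).3 ^ 2 + (Phi a b c).4 ^ 2 = 1 := by
    show (Real.cos a * Real.cos b)^2 + (Real.cos a * Real.sin b)^2
      + (Real.sin a * Real.cos c)^2 + (Real.sin a * Real.sin c)^2 = 1
    have h1 := Real.sin_sq_add_cos_sq a
    have h2 := Real.sin_sq_add_cos_sq b
    have h3 := Real.sin_sq_add_cos_sq c
    nlinarith
  rw [e] at h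
  nlinarith [norm_nonneg (Phi a b c)]

lemma Phi_lip (a b c a' b' c' : ℝ) :
    ‖Phi a b c - Phi a' b' c'‖ ≤ 4 * |a - a'| + 2 * |b - b'| + 2 * |c - c'| := by
  have hd : Phi a b c - Phi a' b' c' =
      ⟨Real.cos a * Real.cos b - Real.cos a' * Real.cos b',
       Real.cos a * Real.sin b - Real.cos a' * Real.sin b',
       Real.sin a * Real.cos c - Real.sin a' * Real.cos c',
       Real.sin a * Real.sin c - Real.sin a' * Real.sin c'⟩ := rfl
  have hle := quat_norm_le (Phi a b c - Phi a' b' c')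
  rw [hd] at hle
  simp only at hle
  rw [← hd] at hle
  have lipc : ∀ x y : ℝ, |Real.cos x - Real.cos y| ≤ |x - y| := cos_lip
  have lips : ∀ x y : ℝ, |Real.sin x - Real.sin y| ≤ |x - y| := sin_lip
  have c1 : ∀ x : ℝ, |Real.cos x| ≤ 1 := fun x => Real.abs_cos_le_one x
  have s1 : ∀ x : ℝ, |Real.sin x| ≤ 1 := fun x => Real.abs_sin_le_one x
  have p1 := (prod_lip (Real.cos a) (Real.cos a') (Real.cos b) (Real.cos b') (c1 a) (c1 b')).trans
    (add_le_add (lipc a a') (lipc b b'))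
  have p2 := (prod_lip (Real.cos a) (Real.cos a') (Real.sin b) (Real.sin b') (c1 a) (s1 b')).trans
    (add_le_add (lipc a a') (lips b b'))
  have p3 := (prod_lip (Real.sin a) (Real.sin a') (Real.cos c) (Real.cos c') (s1 a) (c1 c')).trans
    (add_le_add (lips a a') (lipc c c'))
  have p4 := (prod_lip (Real.sin a) (Real.sin a') (Real.sin c) (Real.sin c') (s1 a) (s1 c')).trans
    (add_le_add (lips a a') (lips c c'))
  linarith


lemma exists_polar (u v : ℝ) :
    ∃ t ∈ Set.Icc (-π) π, Real.sqrt (u^2+v^2) * Real.cos t = u ∧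
      Real.sqrt (u^2+v^2) * Real.sin t = v := by
  rcases eq_or_ne (Real.sqrt (u^2+v^2)) 0 with h | h
  · have h0 : u^2 + v^2 = 0 := by
      have := Real.sqrt_eq_zero'.mp h
      nlinarith [sq_nonneg u, sq_nonneg v]
    have hu : u = 0 := by nlinarith [sq_nonneg u, sq_nonneg v]
    have hv : v = 0 := by nlinarith [sq_nonneg u, sq_nonneg v]
    exact ⟨0, ⟨by linarith [Real.pi_pos], Real.pi_pos.le⟩, by rw [h]; simp [hu], by rw [h]; simp [hv]⟩
  · have hr : (0:ℝ) < Real.sqrt (u^2+v^2) :=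
      lt_of_le_of_ne (Real.sqrt_nonneg _) (Ne.symm h)
    have hsq : Real.sqrt (u^2+v^2) ^ 2 = u^2+v^2 := Real.sq_sqrt (by positivity)
    obtain ⟨t, ht, hc, hs⟩ := exists_cos_sin (u / Real.sqrt (u^2+v^2))
      (v / Real.sqrt (u^2+v^2)) (by
        rw [div_pow, div_pow, hsq, ← add_div, div_self (by nlinarith)])
    exact ⟨t, ht, by rw [hc]; field_simp, by rw [hs]; field_simp⟩

lemma Phi_surj (q : Quaternion ℝ) (hq : ‖q‖ = 1) :
    ∃ a ∈ Set.Icc (-π) π, ∃ b ∈ Set.Icc (-π) π, ∃ c ∈ Set.Icc (-π) π,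
      Phi a b c = q := by
  have hsum : q.1^2 + q.2^2 + q.3^2 + q.4^2 = 1 := by
    have h := Quaternion.normSq_eq_norm_mul_self q
    rw [Quaternion.normSq_def', hq] at h
    linarith
  set r₁ := Real.sqrt (q.1^2 + q.2^2) with hr₁
  set r₂ := Real.sqrt (q.3^2 + q.4^2) with hr₂
  have hr₁sq : r₁^2 = q.1^2 + q.2^2 := Real.sq_sqrt (by positivity)
  have hr₂sq : r₂^2 = q.3^2 + q.4^2 := Real.sq_sqrt (by positivity)
  have hr₁n : 0 ≤ r₁ := Real.sqrt_nonneg _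
  have hr₂n : 0 ≤ r₂ := Real.sqrt_nonneg _
  have hr₁le : r₁ ≤ 1 := by nlinarith [sq_nonneg q.3, sq_nonneg q.4]
  set a := Real.arccos r₁ with ha
  have hca : Real.cos a = r₁ := Real.cos_arccos (by linarith) hr₁le
  have hsa : Real.sin a = r₂ := by
    rw [ha, Real.sin_arccos]
    rw [show 1 - r₁^2 = q.3^2 + q.4^2 by nlinarith]
  obtain ⟨b, hb, hcb, hsb⟩ := exists_polar q.1 q.2
  obtain ⟨c, hc, hcc, hsc⟩ := exists_polar q.3 q.4
  refine ⟨a, ⟨by linarith [Real.arccos_nonneg r₁, Real.pi_pos], Real.arccos_le_pi r₁⟩,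
    b, hb, c, hc, ?_⟩
  unfold Phi
  rw [hca, hsa]
  exact Quaternion.ext _ _ hcb hsb hcc hsc

lemma grid_cover (δ : ℝ) (hδ : 0 < δ) (x : ℝ) (hx : x ∈ Set.Icc (-π) π) :
    ∃ k ∈ Finset.range (Nat.floor (2*π/δ) + 1), |x - (-π + k*δ)| ≤ δ := by
  have hxp : 0 ≤ (x + π) / δ := by
    apply div_nonneg _ hδ.le
    linarith [hx.1]
  refine ⟨Nat.floor ((x + π)/δ), ?_, ?_⟩
  · rw [Finset.mem_range, Nat.lt_succ_iff]
    apply Nat.floor_le_floor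
    gcongr
    linarith [hx.2]
  · have h1 : (Nat.floor ((x + π)/δ) : ℝ) ≤ (x + π)/δ := Nat.floor_le hxp
    have h2 : (x + π)/δ < Nat.floor ((x + π)/δ) + 1 := Nat.lt_floor_add_one _
    have h1' : (Nat.floor ((x + π)/δ) : ℝ) * δ ≤ x + π := by
      have := mul_le_mul_of_nonneg_right h1 hδ.le
      rwa [div_mul_cancel₀ _ hδ.ne'] at this
    have h2' : x + π < ((Nat.floor ((x + π)/δ) : ℝ) + 1) * δ := by
      have := mul_lt_mul_of_pos_right h2 hδ
      rwa [div_mul_cancel₀ _ hδ.ne'] at this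
    rw [abs_le]
    constructor <;> nlinarith

/-- A finite `θ`-net of the unit sphere of quaternions with `O(θ⁻³)` points. -/
lemma net_exists (θ : ℝ) (hθ : 0 < θ) (hθ1 : θ ≤ 1) :
    ∃ N : Finset (Quaternion ℝ), (∀ y ∈ N, ‖y‖ = 1) ∧
      (N.card : ℝ) ≤ (16*π+8)^3 * θ⁻¹^3 ∧
      ∀ x : Quaternion ℝ, ‖x‖ = 1 → ∃ y ∈ N, ‖x - y‖ ≤ θ := by
  set δ := θ/8 with hδdef
  have hδ : 0 < δ := by positivity
  set n := Nat.floor (2*π/δ) + 1 with hn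
  refine ⟨((Finset.range n ×ˢ Finset.range n ×ˢ Finset.range n)).image
    (fun (p : ℕ × ℕ × ℕ) => Phi (-π + p.1*δ) (-π + p.2.1*δ) (-π + p.2.2*δ)), ?_, ?_, ?_⟩
  · intro y hy
    simp only [Finset.mem_image] at hy
    obtain ⟨p, _, rfl⟩ := hy
    exact Phi_norm _ _ _
  · calc ((((Finset.range n ×ˢ Finset.range n ×ˢ Finset.range n)).image
        (fun (p : ℕ × ℕ × ℕ) => Phi (-π + p.1*δ) (-π + p.2.1*δ) (-π + p.2.2*δ))).card : ℝ)
        ≤ ((Finset.range n ×ˢ Finset.range n ×ˢ Finset.range n).card : ℝ) := by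
          exact_mod_cast Finset.card_image_le
      _ = (n:ℝ)^3 := by
          simp [Finset.card_product]
          push_cast
          ring
      _ ≤ ((16*π+8) * θ⁻¹)^3 := by
          apply pow_le_pow_left₀ (Nat.cast_nonneg n)
          have h1 : (n:ℝ) ≤ 2*π/δ + 1 := by
            rw [hn]
            push_cast
            linarith [Nat.floor_le (show (0:ℝ) ≤ 2*π/δ by positivity)]
          have h2 : 2*π/δ = 16*π*θ⁻¹ := by
            rw [hδdef]
            field_simp
            ring
          have h3 : (1:ℝ) ≤ 8*θ⁻¹ := by
            rw [show (8:ℝ)*θ⁻¹ = 8/θ by ring]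
            rw [le_div_iff₀ hθ]
            linarith
          rw [h2] at h1
          linarith
      _ = (16*π+8)^3 * θ⁻¹^3 := by rw [mul_pow]
  · intro x hx
    obtain ⟨a, ha, b, hb, c, hc, hPhi⟩ := Phi_surj x hx
    obtain ⟨k₁, hk₁, hk₁d⟩ := grid_cover δ hδ a ha
    obtain ⟨k₂, hk₂, hk₂d⟩ := grid_cover δ hδ b hb
    obtain ⟨k₃, hk₃, hk₃d⟩ := grid_cover δ hδ c hc
    refine ⟨Phi (-π + k₁*δ) (-π + k₂*δ) (-π + k₃*δ), ?_, ?_⟩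
    · refine Finset.mem_image.mpr ⟨(k₁, k₂, k₃), ?_, rfl⟩
      simp only [Finset.mem_product]
      exact ⟨hk₁, hk₂, hk₃⟩
    · rw [← hPhi]
      calc ‖Phi a b c - Phi (-π + k₁*δ) (-π + k₂*δ) (-π + k₃*δ)‖
          ≤ 4 * |a - (-π + k₁*δ)| + 2 * |b - (-π + k₂*δ)| + 2 * |c - (-π + k₃*δ)| :=
            Phi_lip _ _ _ _ _ _
        _ ≤ 4*δ + 2*δ + 2*δ := by gcongr
        _ = θ := by rw [hδdef]; ring


lemma net_exists' (θ : ℝ) (hθ : 0 < θ) (hθ1 : θ ≤ 1) :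
    ∃ N : Finset UnitQuat, (N.card : ℝ) ≤ (16*π+8)^3 * θ⁻¹^3 ∧
      ∀ x : UnitQuat, ∃ y ∈ N, ‖(x : Quaternion ℝ) - y‖ ≤ θ := by
  obtain ⟨N, hmem, hcard, hcover⟩ := net_exists θ hθ hθ1
  refine ⟨N.attach.image (fun z => (⟨z.1, by
    rw [mem_sphere_zero_iff_norm]; exact hmem z.1 z.2⟩ : UnitQuat)), ?_, ?_⟩
  · refine le_trans ?_ hcard
    have h1 := Finset.card_image_le (s := N.attach)
      (f := fun z => (⟨z.1, by rw [mem_sphere_zero_iff_norm]; exact hmem z.1 z.2⟩ : UnitQuat))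
    rw [Finset.card_attach] at h1
    exact_mod_cast h1
  · intro x
    obtain ⟨y, hyN, hxy⟩ := hcover x.1 (mem_sphere_zero_iff_norm.mp x.2)
    exact ⟨⟨y, by rw [mem_sphere_zero_iff_norm]; exact hmem y hyN⟩,
      Finset.mem_image.mpr ⟨⟨y, hyN⟩, Finset.mem_attach _ _, rfl⟩, hxy⟩

/-- The closed cap of chordal radius `θ` around `y` on the unit sphere. -/
def cap (y : UnitQuat) (θ : ℝ) : Set UnitQuat :=
  {q : UnitQuat | ‖(y : Quaternion ℝ) - q‖ ≤ θ}

lemma cap_measurable (y : UnitQuat) (θ : ℝ) : MeasurableSet (cap y θ) := by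
  have : cap y θ = Subtype.val ⁻¹' {q : Quaternion ℝ | ‖(y : Quaternion ℝ) - q‖ ≤ θ} := rfl
  rw [this]
  apply measurable_subtype_coe
  have : IsClosed {q : Quaternion ℝ | ‖(y : Quaternion ℝ) - q‖ ≤ θ} :=
    isClosed_le (Continuous.norm (continuous_const.sub continuous_id)) continuous_const
  exact this.measurableSet

lemma cap_preimage (y : UnitQuat) (θ : ℝ) :
    cap y θ = (fun q : UnitQuat => y⁻¹ * q) ⁻¹' (cap 1 θ) := by
  ext q
  simp only [cap, Set.mem_setOf_eq, Set.mem_preimage]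
  have hy0 : (y : Quaternion ℝ) ≠ 0 := by
    intro h
    have := mem_sphere_zero_iff_norm.mp y.2
    rw [h] at this; simp at this
  have hcoe : ((y⁻¹ * q : UnitQuat) : Quaternion ℝ) = (y : Quaternion ℝ)⁻¹ * q := by
    rw [Metric.unitSphere.coe_mul, Metric.unitSphere.coe_inv]
  rw [Metric.unitSphere.coe_one, hcoe]
  have key : ‖(y : Quaternion ℝ) - q‖ = ‖1 - (y : Quaternion ℝ)⁻¹ * q‖ := by
    have : (y : Quaternion ℝ) - q = (y : Quaternion ℝ) * (1 - (y : Quaternion ℝ)⁻¹ * q) := by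
      rw [mul_sub, mul_one, ← mul_assoc, mul_inv_cancel₀ hy0, one_mul]
    rw [this, norm_mul, mem_sphere_zero_iff_norm.mp y.2, one_mul]
  rw [key]

lemma cap_measure_eq (μ : Measure UnitQuat) [μ.IsHaarMeasure] (y : UnitQuat) (θ : ℝ) :
    μ (cap y θ) = μ (cap 1 θ) := by
  rw [cap_preimage]
  exact measure_preimage_mul μ y⁻¹ _

lemma cap_measure_ge (μ : Measure UnitQuat) [μ.IsHaarMeasure] [IsProbabilityMeasure μ]
    (θ : ℝ) (hθ : 0 < θ) (hθ1 : θ ≤ 1) (y : UnitQuat) :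
    ENNReal.ofReal (((16*π+8)^3)⁻¹ * θ^3) ≤ μ (cap y θ) := by
  obtain ⟨N, hcard, hcover⟩ := net_exists' θ hθ hθ1
  have hcov : (Set.univ : Set UnitQuat) ⊆ ⋃ z ∈ N, cap z θ := by
    intro x _
    obtain ⟨z, hz, hxz⟩ := hcover x
    refine Set.mem_biUnion hz ?_
    simp only [cap, Set.mem_setOf_eq]
    rw [norm_sub_rev]
    exact hxz
  have h1 : (1 : ℝ≥0∞) ≤ (N.card : ℝ≥0∞) * μ (cap 1 θ) := by
    calc (1 : ℝ≥0∞) = μ Set.univ := (measure_univ).symm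
      _ ≤ μ (⋃ z ∈ N, cap z θ) := measure_mono hcov
      _ ≤ ∑ z ∈ N, μ (cap z θ) := measure_biUnion_finset_le N _
      _ = ∑ _z ∈ N, μ (cap 1 θ) := by
          apply Finset.sum_congr rfl
          intro z _
          exact cap_measure_eq μ z θ
      _ = (N.card : ℝ≥0∞) * μ (cap 1 θ) := by
          rw [Finset.sum_const, nsmul_eq_mul]
  have hfin : μ (cap 1 θ) ≠ ⊤ := measure_ne_top μ _
  have htr : (1 : ℝ) ≤ (N.card : ℝ) * (μ (cap 1 θ)).toReal := by
    have := ENNReal.toReal_mono (by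
      exact ENNReal.mul_ne_top (by simp) hfin) h1
    simpa [ENNReal.toReal_mul] using this
  have hA : (0:ℝ) < (16*π+8)^3 := by positivity
  have hNpos : (0:ℝ) < N.card := by
    by_contra h
    push_neg at h
    have : (N.card : ℝ) = 0 := le_antisymm h (Nat.cast_nonneg _)
    rw [this] at htr; norm_num at htr
  have hmt : ((16*π+8)^3)⁻¹ * θ^3 ≤ (μ (cap 1 θ)).toReal := by
    have hle : (N.card : ℝ) ≤ (16*π+8)^3 * θ⁻¹^3 := hcard
    have hmupos : 0 ≤ (μ (cap 1 θ)).toReal := ENNReal.toReal_nonneg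
    have hinv : θ⁻¹^3 = (θ^3)⁻¹ := by rw [← inv_pow]
    have hθ3 : (0:ℝ) < θ^3 := by positivity
    rw [hinv] at hle
    have h2 : (1:ℝ) ≤ ((16*π+8)^3 * (θ^3)⁻¹) * (μ (cap 1 θ)).toReal :=
      le_trans htr (by nlinarith)
    have h3 := mul_le_mul_of_nonneg_left h2 (show (0:ℝ) ≤ ((16*π+8)^3)⁻¹ * θ^3 by positivity)
    have he : ((16*π+8)^3)⁻¹ * θ^3 * ((16*π+8)^3 * (θ^3)⁻¹ * (μ (cap 1 θ)).toReal)
        = (μ (cap 1 θ)).toReal := by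
      field_simp
    rw [he, mul_one] at h3
    exact h3
  calc ENNReal.ofReal (((16*π+8)^3)⁻¹ * θ^3)
      ≤ ENNReal.ofReal ((μ (cap 1 θ)).toReal) := ENNReal.ofReal_le_ofReal hmt
    _ = μ (cap 1 θ) := ENNReal.ofReal_toReal hfin
    _ = μ (cap y θ) := (cap_measure_eq μ y θ).symm


lemma exists_bad_point (C : Set (Quaternion ℝ)) (θ : ℝ) (hθ : 0 < θ)
    (h : 2 * θ < covRad C) :
    ∃ x : Quaternion ℝ, ‖x‖ = 1 ∧ ∀ c ∈ C, 2 * θ < ‖x - c‖ := by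
  by_contra hcon
  push_neg at hcon
  apply absurd h
  push_neg
  apply Real.sSup_le _ (by linarith)
  rintro d ⟨x, hx, rfl⟩
  obtain ⟨c, hc, hcd⟩ := hcon x hx
  refine le_trans (csInf_le ⟨0, ?_⟩ ⟨c, hc, rfl⟩) hcd
  rintro e ⟨c', _, rfl⟩
  exact norm_nonneg _

lemma one_mem_Hurwitz : (1 : Quaternion ℝ) ∈ Hurwitz :=
  Set.mem_union_left _ (by left; rfl)

/-- There are constants `c₀, c₁, θ₀ > 0` such that: if `q₁, …, q_S` (`S ≥ 1`) are i.i.d.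
Haar-random unit quaternions and `C = {p * qᵢ : p ∈ 2T, i ∈ [S]}`, then for every
`0 < θ ≤ θ₀`, the covering radius `ρ(C) = sup_x min_{c ∈ C} ‖x - c‖` satisfies
`Pr[ρ(C) > 2θ] ≤ c₁ * θ⁻³ * exp (-c₀ * S * θ³)`. -/
theorem covering_radius_tail_bound :
    ∃ c₀ > (0 : ℝ), ∃ c₁ > (0 : ℝ), ∃ θ₀ > (0 : ℝ),
      ∀ (S : ℕ), 1 ≤ S →
        ∀ {Ω : Type} [MeasurableSpace Ω] (P : Measure Ω) [IsProbabilityMeasure P]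
          (μ : Measure UnitQuat) [μ.IsHaarMeasure] [IsProbabilityMeasure μ]
          (X : Fin S → Ω → UnitQuat),
          (∀ i, Measurable (X i)) → (∀ i, Measure.map (X i) P = μ) →
          iIndepFun X P →
          ∀ θ : ℝ, 0 < θ → θ ≤ θ₀ →
            P {ω | 2 * θ <
                covRad {c : Quaternion ℝ | ∃ p ∈ Hurwitz, ∃ i : Fin S,
                  c = p * (X i ω : Quaternion ℝ)}} ≤
              ENNReal.ofReal (c₁ * θ⁻¹ ^ 3 * Real.exp (-(c₀ * S * θ ^ 3))) := by
  set A : ℝ := (16*π+8)^3 with hA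
  have hApos : (0:ℝ) < A := by positivity
  have hAone : (1:ℝ) ≤ A := by
    rw [hA]
    apply one_le_pow₀
    nlinarith [Real.pi_gt_three]
  refine ⟨A⁻¹, by positivity, A, hApos, 1, one_pos, ?_⟩
  intro S hS Ω mΩ P hP μ hμHaar hμprob X hX hmap hind θ hθ hθ1
  obtain ⟨N, hcard, hcover⟩ := net_exists' θ hθ hθ1
  have hv1 : A⁻¹ * θ^3 ≤ 1 := by
    have h3 : θ^3 ≤ 1 := pow_le_one₀ hθ.le hθ1
    have : A⁻¹ ≤ 1 := by
      rw [inv_le_one_iff₀]; right; exact hAone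
    nlinarith [inv_pos.mpr hApos]
  -- Event inclusion
  have hincl : {ω | 2 * θ <
      covRad {c : Quaternion ℝ | ∃ p ∈ Hurwitz, ∃ i : Fin S,
        c = p * (X i ω : Quaternion ℝ)}} ⊆
      ⋃ y ∈ N, ⋂ i : Fin S, (X i) ⁻¹' ((cap y θ)ᶜ) := by
    intro ω hω
    simp only [Set.mem_setOf_eq] at hω
    obtain ⟨x, hx, hbad⟩ := exists_bad_point _ θ hθ hω
    obtain ⟨y, hyN, hxy⟩ := hcover ⟨x, mem_sphere_zero_iff_norm.mpr hx⟩
    refine Set.mem_biUnion hyN ?_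
    refine Set.mem_iInter.mpr fun i => ?_
    simp only [Set.mem_preimage, Set.mem_compl_iff, cap, Set.mem_setOf_eq, not_le]
    have hc : (X i ω : Quaternion ℝ) ∈ {c : Quaternion ℝ | ∃ p ∈ Hurwitz, ∃ i : Fin S,
        c = p * (X i ω : Quaternion ℝ)} := ⟨1, one_mem_Hurwitz, i, (one_mul _).symm⟩
    have h1 := hbad _ hc
    have htri : ‖x - (X i ω : Quaternion ℝ)‖ ≤ ‖x - (y : Quaternion ℝ)‖
        + ‖(y : Quaternion ℝ) - (X i ω : Quaternion ℝ)‖ := by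
      have := norm_sub_le_norm_sub_add_norm_sub x (y : Quaternion ℝ) (X i ω : Quaternion ℝ)
      exact this
    linarith
  -- probability of each piece
  have hpiece : ∀ y ∈ N, P (⋂ i : Fin S, (X i) ⁻¹' ((cap y θ)ᶜ)) ≤
      ENNReal.ofReal ((1 - A⁻¹ * θ^3)^S) := by
    intro y _
    have hmeas : MeasurableSet ((cap y θ)ᶜ) := (cap_measurable y θ).compl
    have hprod := hind.meas_iInter (s := fun i => (X i) ⁻¹' ((cap y θ)ᶜ))
      (fun i => ⟨(cap y θ)ᶜ, hmeas, rfl⟩)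
    rw [hprod]
    have hone : ∀ i : Fin S, P ((X i) ⁻¹' ((cap y θ)ᶜ)) ≤ ENNReal.ofReal (1 - A⁻¹ * θ^3) := by
      intro i
      have hmapi : P ((X i) ⁻¹' ((cap y θ)ᶜ)) = μ ((cap y θ)ᶜ) := by
        rw [← hmap i, Measure.map_apply (hX i) hmeas]
      rw [hmapi, measure_compl (cap_measurable y θ) (measure_ne_top μ _), measure_univ]
      have hge := cap_measure_ge μ θ hθ hθ1 y
      rw [hA] at *
      calc (1 : ℝ≥0∞) - μ (cap y θ) ≤ 1 - ENNReal.ofReal ((((16*π+8)^3))⁻¹ * θ^3) :=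
            tsub_le_tsub_left hge 1
        _ = ENNReal.ofReal (1 - (((16*π+8)^3))⁻¹ * θ^3) := by
            rw [← ENNReal.ofReal_one, ← ENNReal.ofReal_sub _ (by positivity)]
    calc ∏ i : Fin S, P ((X i) ⁻¹' ((cap y θ)ᶜ))
        ≤ ∏ _i : Fin S, ENNReal.ofReal (1 - A⁻¹ * θ^3) :=
          Finset.prod_le_prod' fun i _ => hone i
      _ = (ENNReal.ofReal (1 - A⁻¹ * θ^3))^S := by
          rw [Finset.prod_const, Finset.card_univ, Fintype.card_fin]
      _ = ENNReal.ofReal ((1 - A⁻¹ * θ^3)^S) := by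
          rw [ENNReal.ofReal_pow (by linarith)]
  -- assemble
  calc P {ω | 2 * θ < covRad {c : Quaternion ℝ | ∃ p ∈ Hurwitz, ∃ i : Fin S,
        c = p * (X i ω : Quaternion ℝ)}}
      ≤ P (⋃ y ∈ N, ⋂ i : Fin S, (X i) ⁻¹' ((cap y θ)ᶜ)) := measure_mono hincl
    _ ≤ ∑ y ∈ N, P (⋂ i : Fin S, (X i) ⁻¹' ((cap y θ)ᶜ)) := measure_biUnion_finset_le N _
    _ ≤ ∑ _y ∈ N, ENNReal.ofReal ((1 - A⁻¹ * θ^3)^S) := Finset.sum_le_sum hpiece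
    _ = (N.card : ℝ≥0∞) * ENNReal.ofReal ((1 - A⁻¹ * θ^3)^S) := by
        rw [Finset.sum_const, nsmul_eq_mul]
    _ = ENNReal.ofReal ((N.card : ℝ) * (1 - A⁻¹ * θ^3)^S) := by
        rw [ENNReal.ofReal_mul (Nat.cast_nonneg _), ENNReal.ofReal_natCast]
    _ ≤ ENNReal.ofReal (A * θ⁻¹ ^ 3 * Real.exp (-(A⁻¹ * S * θ ^ 3))) := by
        apply ENNReal.ofReal_le_ofReal
        have hpow : (1 - A⁻¹ * θ^3)^S ≤ Real.exp (-(A⁻¹ * S * θ ^ 3)) := by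
          have hstep : (1 - A⁻¹ * θ^3) ≤ Real.exp (-(A⁻¹ * θ^3)) := by
            linarith [Real.add_one_le_exp (-(A⁻¹ * θ^3))]
          calc (1 - A⁻¹ * θ^3)^S ≤ (Real.exp (-(A⁻¹ * θ^3)))^S :=
                pow_le_pow_left₀ (by linarith) hstep S
            _ = Real.exp (-(A⁻¹ * S * θ ^ 3)) := by
                rw [← Real.exp_nat_mul]
                ring_nf
        have hexp : 0 ≤ Real.exp (-(A⁻¹ * S * θ ^ 3)) := (Real.exp_pos _).le
        have hpw : (0:ℝ) ≤ (1 - A⁻¹ * θ^3)^S := pow_nonneg (by linarith) S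
        calc (N.card : ℝ) * (1 - A⁻¹ * θ^3)^S
            ≤ (A * θ⁻¹ ^ 3) * Real.exp (-(A⁻¹ * S * θ ^ 3)) := by
              apply mul_le_mul hcard hpow hpw (by positivity)
          _ = A * θ⁻¹ ^ 3 * Real.exp (-(A⁻¹ * S * θ ^ 3)) := by ring
end
end
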